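/- arXiv:2502.04270 — 2 statements merged into one kernel-verified Lean document; each statement's English description precedes it below -/
import Mathlib

section
/- For all real z and z*, the identity σ(z*) - σ(z) = σ'(z)(z* - z) + R holds with a remainder R satisfying |R| ≤ 0.1·(1 + e^{2R₀})·(z* - z)² whenever |z|, |z*| ≤ 2R₀. In particular, if |z|,|z*| ≤ 2R₀ then |(σ(z*) - σ(z))/σ'(z) - (z* - z)| ≤ 0.1·(1 + e^{2R₀})·(z* - z)². -/
/-!
The derivative σ' = σ(1 - σ) of the sigmoid has derivative u(1 - u²)/4 with u = 1 - 2σ ∈ [-1, 1],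
whose absolute value is at most 1/(6√3) < 1/10. So σ' is 1/10-Lipschitz, and the usual integral
form of the first-order Taylor remainder gives |σ(z*) - σ(z) - σ'(z)(z* - z)| ≤ (z* - z)²/20.
Dividing by σ'(z) costs the factor 1/σ'(z) = 2 + e^z + e^{-z} ≤ 2(1 + e^{2R₀}).
-/

noncomputable def sigmoid (z : ℝ) : ℝ := (1 + Real.exp (-z))⁻¹

noncomputable def sigmoid' (z : ℝ) : ℝ := sigmoid z * sigmoid (-z)

open scoped NNReal

theorem abs_sub_sub_mul_le_of_lipschitzWith {f f' : ℝ → ℝ} {C : ℝ≥0}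
    (hf : ∀ t, HasDerivAt f (f' t) t) (hf' : LipschitzWith C f') (x y : ℝ) :
    |f y - f x - f' x * (y - x)| ≤ C / 2 * (y - x) ^ 2 := by
  wlog hxy : x ≤ y generalizing f f' x y
  · have hneg := this (f := fun t => f (-t)) (f' := fun t => -f' (-t))
      (fun t => by simpa [Function.comp_def] using (hf (-t)).comp t (hasDerivAt_neg t))
      (LipschitzWith.of_dist_le_mul fun a b => by simpa using hf'.dist_le_mul (-a) (-b))
      (-x) (-y) (by linarith)
    simp only [neg_neg] at hneg
    convert hneg using 2 <;> ring
  have hint : IntervalIntegrable f' MeasureTheory.volume x y :=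
    hf'.continuous.intervalIntegrable x y
  have hftc : f y - f x - f' x * (y - x) = ∫ t in x..y, (f' t - f' x) := by
    rw [intervalIntegral.integral_sub hint intervalIntegrable_const,
      intervalIntegral.integral_eq_sub_of_hasDerivAt (fun t _ => hf t) hint,
      intervalIntegral.integral_const, smul_eq_mul]
    ring
  calc |f y - f x - f' x * (y - x)| = ‖∫ t in x..y, (f' t - f' x)‖ := by
        rw [hftc, Real.norm_eq_abs]
    _ ≤ ∫ t in x..y, C * (t - x) := by
        refine intervalIntegral.norm_integral_le_of_norm_le hxy
          (Filter.Eventually.of_forall fun t ht => ?_)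
          (Continuous.intervalIntegrable (by fun_prop) _ _)
        simpa [Real.dist_eq, abs_of_nonneg (sub_nonneg.2 ht.1.le)] using hf'.dist_le_mul t x
    _ = C / 2 * (y - x) ^ 2 := by
        simp [intervalIntegral.integral_comp_sub_right (fun t => t)]
        ring

theorem abs_mul_one_sub_sq_le {u : ℝ} (hu : |u| ≤ 1) : |u * (1 - u ^ 2)| ≤ 2 / 5 := by
  rw [abs_le] at hu ⊢
  constructor <;> nlinarith [sq_nonneg (u - 3 / 5), sq_nonneg (u + 3 / 5),
    mul_nonneg (sub_nonneg.2 hu.2) (neg_le_iff_add_nonneg'.1 hu.1)]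

theorem sigmoid'_pos (z : ℝ) : 0 < sigmoid' z :=
  mul_pos (Real.sigmoid_pos z) (Real.sigmoid_pos (-z))

theorem sigmoid'_eq (z : ℝ) : sigmoid' z = Real.sigmoid z * (1 - Real.sigmoid z) :=
  congrArg (Real.sigmoid z * ·) (Real.sigmoid_neg z)

theorem hasDerivAt_sigmoid (z : ℝ) : HasDerivAt sigmoid (sigmoid' z) z :=
  (Real.hasDerivAt_sigmoid z).congr_deriv (sigmoid'_eq z).symm

theorem hasDerivAt_sigmoid' (z : ℝ) :
    HasDerivAt sigmoid' (sigmoid' z * (1 - 2 * Real.sigmoid z)) z := by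
  have hσ := Real.hasDerivAt_sigmoid z
  rw [show sigmoid' = fun x => Real.sigmoid x * (1 - Real.sigmoid x) from funext sigmoid'_eq]
  exact (hσ.mul (hσ.const_sub 1)).congr_deriv (by ring)

theorem abs_sigmoid'_mul_one_sub_two_mul_sigmoid_le (z : ℝ) :
    |sigmoid' z * (1 - 2 * Real.sigmoid z)| ≤ 1 / 10 := by
  set s := Real.sigmoid z
  have hu : |1 - 2 * s| ≤ 1 := by
    rw [abs_le]; constructor <;> linarith [Real.sigmoid_pos z, Real.sigmoid_lt_one z]
  rw [sigmoid'_eq,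
    show s * (1 - s) * (1 - 2 * s) = (1 - 2 * s) * (1 - (1 - 2 * s) ^ 2) / 4 by ring,
    abs_div, abs_of_pos (by norm_num : (0 : ℝ) < 4)]
  linarith [abs_mul_one_sub_sq_le hu]

theorem lipschitzWith_sigmoid' : LipschitzWith (1 / 10) sigmoid' :=
  lipschitzWith_of_nnnorm_deriv_le (fun z => (hasDerivAt_sigmoid' z).differentiableAt) fun z => by
    rw [(hasDerivAt_sigmoid' z).deriv, ← NNReal.coe_le_coe, coe_nnnorm, Real.norm_eq_abs]
    simpa using abs_sigmoid'_mul_one_sub_two_mul_sigmoid_le z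

theorem abs_sigmoid_sub_sub_mul_le (z zs : ℝ) :
    |sigmoid zs - sigmoid z - sigmoid' z * (zs - z)| ≤ 1 / 20 * (zs - z) ^ 2 := by
  have h := abs_sub_sub_mul_le_of_lipschitzWith hasDerivAt_sigmoid lipschitzWith_sigmoid' z zs
  norm_num at h ⊢
  linarith

theorem inv_sigmoid' (z : ℝ) : (sigmoid' z)⁻¹ = 2 + Real.exp z + Real.exp (-z) := by
  rw [sigmoid', sigmoid, sigmoid, neg_neg, mul_inv, inv_inv, inv_inv]
  have h : Real.exp (-z) * Real.exp z = 1 := by rw [← Real.exp_add, neg_add_cancel, Real.exp_zero]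
  linear_combination h

theorem inv_sigmoid'_le {z r : ℝ} (hz : |z| ≤ r) : (sigmoid' z)⁻¹ ≤ 2 * (1 + Real.exp r) := by
  have h₁ : Real.exp z ≤ Real.exp r := Real.exp_le_exp.2 ((le_abs_self z).trans hz)
  have h₂ : Real.exp (-z) ≤ Real.exp r := Real.exp_le_exp.2 ((neg_le_abs z).trans hz)
  rw [inv_sigmoid']
  linarith

theorem sigmoid_taylor_bound_general (R₀ : ℝ) (z zs : ℝ)
    (hz : |z| ≤ 2 * R₀) :
    (∃ R : ℝ, sigmoid zs - sigmoid z = sigmoid' z * (zs - z) + R ∧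
      |R| ≤ 0.1 * (1 + Real.exp (2 * R₀)) * (zs - z) ^ 2) ∧
    |(sigmoid zs - sigmoid z) / sigmoid' z - (zs - z)| ≤
      0.1 * (1 + Real.exp (2 * R₀)) * (zs - z) ^ 2 := by
  set R := sigmoid zs - sigmoid z - sigmoid' z * (zs - z)
  have hR : |R| ≤ 1 / 20 * (zs - z) ^ 2 := abs_sigmoid_sub_sub_mul_le z zs
  have hsq : 0 ≤ (zs - z) ^ 2 := sq_nonneg _
  have hexp := Real.exp_pos (2 * R₀)
  refine ⟨⟨R, by ring, by nlinarith⟩, ?_⟩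
  have hdiv : (sigmoid zs - sigmoid z) / sigmoid' z - (zs - z) = R * (sigmoid' z)⁻¹ := by
    field_simp [(sigmoid'_pos z).ne']
    ring
  calc |(sigmoid zs - sigmoid z) / sigmoid' z - (zs - z)| = |R| * (sigmoid' z)⁻¹ := by
        rw [hdiv, abs_mul, abs_of_pos (inv_pos.2 (sigmoid'_pos z))]
    _ ≤ 1 / 20 * (zs - z) ^ 2 * (2 * (1 + Real.exp (2 * R₀))) :=
        mul_le_mul hR (inv_sigmoid'_le hz) (inv_pos.2 (sigmoid'_pos z)).le (by positivity)
    _ = 0.1 * (1 + Real.exp (2 * R₀)) * (zs - z) ^ 2 := by ring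

theorem sigmoid_taylor_bound (R₀ : ℝ) (hR₀ : 0 < R₀) (z zs : ℝ)
    (hz : |z| ≤ 2 * R₀) (hzs : |zs| ≤ 2 * R₀) :
    (∃ R : ℝ, sigmoid zs - sigmoid z = sigmoid' z * (zs - z) + R ∧
      |R| ≤ 0.1 * (1 + Real.exp (2 * R₀)) * (zs - z) ^ 2) ∧
    |(sigmoid zs - sigmoid z) / sigmoid' z - (zs - z)| ≤
      0.1 * (1 + Real.exp (2 * R₀)) * (zs - z) ^ 2 :=
  sigmoid_taylor_bound_general R₀ z zs hz
end

section
/- Let π_θ be a differentiable family of positive densities on a finite set Y, r* : Y → ℝ a fixed function, π_ref a fixed positive density, β > 0, and r_θ(y) = β·log(π_θ(y)/π_ref(y)). Define J(θ) = Σ_y π_θ(y)·r*(y) - β·Σ_y π_θ(y)·log(π_θ(y)/π_ref(y)). Then ∇_θ J(θ) = (1/β)·Σ_y π_θ(y)·(r*(y) - r_θ(y))·(∇_θ r_θ(y) - E_{y'∼π_θ}[∇_θ r_θ(y')]). -/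
/-!
Write `∇π(y)` for the derivative of `θ ↦ π_θ(y)`. Differentiating `∑_y π_θ(y) = 1` gives
`∑_y ∇π(y) = 0`; this kills both the expectation `E_{π_θ}[∇r_θ] = β ∑_y ∇π(y)` on the right and
the term `-β ∑_y ∇π(y)` produced on the left by differentiating the logarithm. Since
`π_θ(y) ∇r_θ(y) = β ∇π(y)`, both sides reduce to `∑_y (r*(y) - r_θ(y)) ∇π(y)`.
-/

open Finset

section

variable {E : Type*} [NormedAddCommGroup E] [NormedSpace ℝ E] {Y : Type*} [Fintype Y]

theorem HasFDerivAt.log_div_const {f : E → ℝ} {f' : E →L[ℝ] ℝ} {x : E} (hf : HasFDerivAt f f' x)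
    (hx : f x ≠ 0) {c : ℝ} (hc : c ≠ 0) :
    HasFDerivAt (fun y => Real.log (f y / c)) ((f x)⁻¹ • f') x := by
  simp only [div_eq_mul_inv]
  convert (hf.mul_const c⁻¹).log (mul_ne_zero hx (inv_ne_zero hc)) using 1
  rw [smul_smul, mul_inv, inv_inv, mul_assoc, mul_inv_cancel₀ hc, mul_one]

theorem sum_fderiv_eq_zero_of_sum_eq_one {π : E → Y → ℝ} (hsum : ∀ θ, ∑ y, π θ y = 1)
    (hdiff : ∀ y, Differentiable ℝ (fun θ => π θ y)) (θ : E) :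
    ∑ y, fderiv ℝ (fun θ' => π θ' y) θ = 0 := by
  have hsumDeriv : HasFDerivAt (fun θ' => ∑ y, π θ' y) (∑ y, fderiv ℝ (fun θ' => π θ' y) θ) θ :=
    HasFDerivAt.fun_sum fun y _ => (hdiff y θ).hasFDerivAt
  rw [← hsumDeriv.fderiv, funext hsum, fderiv_const_apply]

theorem hasFDerivAt_klRegularizedObjective {π : E → Y → ℝ} {πref : Y → ℝ} (rstar : Y → ℝ)
    (β : ℝ) {θ : E} (hne : ∀ y, π θ y ≠ 0) (hrefne : ∀ y, πref y ≠ 0)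
    (hsum : ∀ θ', ∑ y, π θ' y = 1) (hdiff : ∀ y, Differentiable ℝ (fun θ' => π θ' y)) :
    HasFDerivAt (fun θ' => (∑ y, π θ' y * rstar y) -
        β * ∑ y, π θ' y * Real.log (π θ' y / πref y))
      (∑ y, (rstar y - β * Real.log (π θ y / πref y)) • fderiv ℝ (fun θ' => π θ' y) θ) θ := by
  have hentropyTerm : ∀ y, HasFDerivAt (fun θ' => π θ' y * Real.log (π θ' y / πref y))
      (fderiv ℝ (fun θ' => π θ' y) θ +
        Real.log (π θ y / πref y) • fderiv ℝ (fun θ' => π θ' y) θ) θ := fun y => by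
    refine ((hdiff y θ).hasFDerivAt.mul
      ((hdiff y θ).hasFDerivAt.log_div_const (hne y) (hrefne y))).congr_fderiv ?_
    rw [smul_smul, mul_inv_cancel₀ (hne y), one_smul]
  refine ((HasFDerivAt.fun_sum fun y _ => (hdiff y θ).hasFDerivAt.mul_const (rstar y)).sub
    ((HasFDerivAt.fun_sum fun y _ => hentropyTerm y).const_mul β)).congr_fderiv ?_
  rw [sum_add_distrib, sum_fderiv_eq_zero_of_sum_eq_one hsum hdiff θ, zero_add, smul_sum,
    ← sum_sub_distrib]
  simp only [sub_smul, smul_smul]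

end

/-- Gradient of the KL-regularized oracle objective
`J(θ) = Σ_y π_θ(y)·r*(y) - β·Σ_y π_θ(y)·log(π_θ(y)/π_ref(y))`:
`∇_θ J(θ) = (1/β)·Σ_y π_θ(y)·(r*(y) - r_θ(y))·(∇_θ r_θ(y) - E_{y'∼π_θ}[∇_θ r_θ(y')])`. -/
theorem objective_gradient (d : ℕ) {Y : Type*} [Fintype Y]
    (π : (Fin d → ℝ) → Y → ℝ) (πref : Y → ℝ) (rstar : Y → ℝ) (β : ℝ) (hβ : 0 < β)
    (hpos : ∀ θ y, 0 < π θ y) (hrefpos : ∀ y, 0 < πref y)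
    (hsum : ∀ θ, ∑ y, π θ y = 1)
    (hdiff : ∀ y, Differentiable ℝ (fun θ => π θ y))
    (θ : Fin d → ℝ) :
    fderiv ℝ (fun θ' => (∑ y : Y, π θ' y * rstar y) -
        β * ∑ y : Y, π θ' y * Real.log (π θ' y / πref y)) θ =
      (1 / β) •
        ∑ y : Y, (π θ y * (rstar y - β * Real.log (π θ y / πref y))) •
          (fderiv ℝ (fun θ' => β * Real.log (π θ' y / πref y)) θ -
            ∑ y' : Y, π θ y' •
              fderiv ℝ (fun θ'' => β * Real.log (π θ'' y' / πref y')) θ) := by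
  set D : Y → (Fin d → ℝ) →L[ℝ] ℝ := fun y => fderiv ℝ (fun θ' => π θ' y) θ
  have hne : ∀ y, π θ y ≠ 0 := fun y => (hpos θ y).ne'
  have hrefne : ∀ y, πref y ≠ 0 := fun y => (hrefpos y).ne'
  have hreward : ∀ y, fderiv ℝ (fun θ' => β * Real.log (π θ' y / πref y)) θ
      = (β * (π θ y)⁻¹) • D y := fun y => by
    rw [(((hdiff y θ).hasFDerivAt.log_div_const (hne y) (hrefne y)).const_mul β).fderiv,
      smul_smul]
  have hmeanReward : ∑ y, π θ y • fderiv ℝ (fun θ' => β * Real.log (π θ' y / πref y)) θ = 0 := by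
    simp_rw [hreward, smul_smul, mul_left_comm, mul_inv_cancel₀ (hne _), mul_one, ← smul_sum]
    rw [sum_fderiv_eq_zero_of_sum_eq_one hsum hdiff θ, smul_zero]
  rw [(hasFDerivAt_klRegularizedObjective rstar β hne hrefne hsum hdiff).fderiv, hmeanReward]
  simp_rw [sub_zero, hreward, smul_sum, smul_smul]
  refine sum_congr rfl fun y _ => ?_
  congr 1
  field_simp [hβ.ne', hne y]
end
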